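/- Let F = (f_1,...,f_k) be a spherical tight frame for E^n, let d = gcd(n,k) and k' = k/d. If F is orthodecomposable via a subset A (i.e., (f_i)_{i∈A} is a tight frame for a subspace V and (f_i)_{i∉A} is a tight frame for V^⊥), then |A| is a multiple of k'. In particular, if gcd(n,k) = 1 then no spherical tight frame of k vectors in E^n is orthodecomposable. -/

import Mathlib

/-!
Let `m = dim V`. Evaluating the tight-frame identity of `F` at a vector `f_i ∈ V` (`i ∈ A`), the
vectors outside `A` contribute nothing, so the frame bound of `(f_i)_{i∈A}` on `V` is `k / n`.
Summing that identity over an orthonormal basis of `V` and exchanging the sums (Parseval) gives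
`|A| = (k / n) m`, i.e. `n |A| = k m`; hence `k / gcd(n, k)` divides `|A|`.
-/

open Finset

theorem Nat.div_gcd_dvd_of_dvd_mul {n k a : ℕ} (hn : 0 < n) (h : k ∣ n * a) :
    k / n.gcd k ∣ a := by
  have hcop := Nat.coprime_div_gcd_div_gcd (Nat.gcd_pos_of_pos_left k hn)
  refine hcop.symm.dvd_of_dvd_mul_left ?_
  rw [← Nat.mul_div_right_comm (Nat.gcd_dvd_left n k)]
  exact Nat.div_dvd_div (Nat.gcd_dvd_right n k) h

section

variable {𝕜 E ι : Type*} [RCLike 𝕜] [NormedAddCommGroup E] [InnerProductSpace 𝕜 E]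

theorem sum_norm_sq_eq_mul_finrank {V : Submodule 𝕜 E} [FiniteDimensional 𝕜 V]
    {A : Finset ι} {f : ι → E} {c : ℝ} (hf : ∀ i ∈ A, f i ∈ V)
    (htight : ∀ v ∈ V, ∑ i ∈ A, ‖(inner 𝕜 v (f i) : 𝕜)‖ ^ 2 = c * ‖v‖ ^ 2) :
    ∑ i ∈ A, ‖f i‖ ^ 2 = c * Module.finrank 𝕜 V := by
  set b := stdOrthonormalBasis 𝕜 V
  calc ∑ i ∈ A, ‖f i‖ ^ 2
      = ∑ i ∈ A, ∑ j, ‖(inner 𝕜 (b j : E) (f i) : 𝕜)‖ ^ 2 := by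
        refine sum_congr rfl fun i hi => ?_
        have := b.sum_sq_norm_inner_right ⟨f i, hf i hi⟩
        simpa only [Submodule.coe_inner, Submodule.coe_norm] using this.symm
    _ = ∑ j, ∑ i ∈ A, ‖(inner 𝕜 (b j : E) (f i) : 𝕜)‖ ^ 2 := sum_comm
    _ = ∑ _j : Fin (Module.finrank 𝕜 V), c := by
        refine sum_congr rfl fun j _ => ?_
        rw [htight _ (b j).2, Submodule.norm_coe, b.orthonormal.1 j, one_pow, mul_one]
    _ = c * Module.finrank 𝕜 V := by simp [mul_comm]

theorem sum_norm_sq_inner_eq_sum_of_mem_orthogonal {V : Submodule 𝕜 E} {A : Finset ι}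
    [Fintype ι] {f : ι → E} (hf : ∀ i ∉ A, f i ∈ Vᗮ) {v : E} (hv : v ∈ V) :
    ∑ i, ‖(inner 𝕜 v (f i) : 𝕜)‖ ^ 2 = ∑ i ∈ A, ‖(inner 𝕜 v (f i) : 𝕜)‖ ^ 2 := by
  refine (sum_subset (subset_univ A) fun i _ hi => ?_).symm
  rw [Submodule.inner_right_of_mem_orthogonal hv (hf i hi), norm_zero, sq, zero_mul]

theorem card_eq_mul_finrank_of_orthogonal_split [Fintype ι] {V : Submodule 𝕜 E}
    [FiniteDimensional 𝕜 V] {A : Finset ι} {f : ι → E} {C c : ℝ} (hA : A.Nonempty)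
    (hunit : ∀ i ∈ A, ‖f i‖ = 1)
    (htight : ∀ v, ∑ i, ‖(inner 𝕜 v (f i) : 𝕜)‖ ^ 2 = C * ‖v‖ ^ 2)
    (hV : ∀ i ∈ A, f i ∈ V) (hVperp : ∀ i ∉ A, f i ∈ Vᗮ)
    (hc : ∀ v ∈ V, ∑ i ∈ A, ‖(inner 𝕜 v (f i) : 𝕜)‖ ^ 2 = c * ‖v‖ ^ 2) :
    (A.card : ℝ) = C * Module.finrank 𝕜 V := by
  obtain ⟨i₀, hi₀⟩ := hA
  have hcC : c = C := by
    have := htight (f i₀)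
    rwa [sum_norm_sq_inner_eq_sum_of_mem_orthogonal hVperp (hV i₀ hi₀), hc _ (hV i₀ hi₀),
      hunit i₀ hi₀, one_pow, mul_one, mul_one] at this
  rw [← hcC, ← sum_norm_sq_eq_mul_finrank hV hc, sum_congr rfl fun i hi => by rw [hunit i hi],
    one_pow, sum_const, nsmul_one]

end

theorem div_gcd_dvd_card_of_orthodecomposable {𝕜 : Type*} [RCLike 𝕜] {n k : ℕ} (hn : 0 < n)
    {f : Fin k → EuclideanSpace 𝕜 (Fin n)} (hunit : ∀ j, ‖f j‖ = 1)
    (htight : ∀ v : EuclideanSpace 𝕜 (Fin n),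
      ∑ j, ‖(inner 𝕜 v (f j) : 𝕜)‖ ^ 2 = ((k : ℝ) / n) * ‖v‖ ^ 2)
    {A : Finset (Fin k)} {V : Submodule 𝕜 (EuclideanSpace 𝕜 (Fin n))}
    (hV : ∀ i ∈ A, f i ∈ V) (hVperp : ∀ i ∉ A, f i ∈ Vᗮ) {c : ℝ}
    (hc : ∀ v ∈ V, ∑ i ∈ A, ‖(inner 𝕜 v (f i) : 𝕜)‖ ^ 2 = c * ‖v‖ ^ 2) :
    k / n.gcd k ∣ A.card := by
  obtain rfl | hA := A.eq_empty_or_nonempty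
  · exact dvd_zero _
  have hcard := card_eq_mul_finrank_of_orthogonal_split hA (fun i _ => hunit i) htight hV hVperp hc
  have hkey : n * A.card = k * Module.finrank 𝕜 V := by
    have hn' : (n : ℝ) ≠ 0 := by positivity
    rw [div_mul_eq_mul_div, eq_div_iff hn'] at hcard
    exact_mod_cast (mul_comm _ _).trans hcard
  exact Nat.div_gcd_dvd_of_dvd_mul hn ⟨_, hkey⟩

theorem stmt16_general {𝕜 : Type*} [RCLike 𝕜] {n k : ℕ} (hn : 0 < n)
    (f : Fin k → EuclideanSpace 𝕜 (Fin n))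
    (hunit : ∀ j, ‖f j‖ = 1)
    (htight : ∀ v : EuclideanSpace 𝕜 (Fin n),
      ∑ j, ‖(inner 𝕜 v (f j) : 𝕜)‖ ^ 2 = ((k : ℝ) / n) * ‖v‖ ^ 2) :
    (∀ A : Finset (Fin k),
      (∃ V : Submodule 𝕜 (EuclideanSpace 𝕜 (Fin n)),
        (∀ i ∈ A, f i ∈ V) ∧ (∀ i ∉ A, f i ∈ Vᗮ) ∧
        (∃ c > (0 : ℝ), ∀ v ∈ V, ∑ i ∈ A, ‖(inner 𝕜 v (f i) : 𝕜)‖ ^ 2 = c * ‖v‖ ^ 2) ∧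
        (∃ c > (0 : ℝ), ∀ v ∈ Vᗮ, ∑ i ∈ Aᶜ, ‖(inner 𝕜 v (f i) : 𝕜)‖ ^ 2 = c * ‖v‖ ^ 2)) →
      (k / Nat.gcd n k) ∣ A.card) ∧
    (Nat.gcd n k = 1 →
      ¬ ∃ A : Finset (Fin k), A ≠ ∅ ∧ A ≠ Finset.univ ∧
        ∃ V : Submodule 𝕜 (EuclideanSpace 𝕜 (Fin n)),
          (∀ i ∈ A, f i ∈ V) ∧ (∀ i ∉ A, f i ∈ Vᗮ) ∧
          (∃ c > (0 : ℝ), ∀ v ∈ V, ∑ i ∈ A, ‖(inner 𝕜 v (f i) : 𝕜)‖ ^ 2 = c * ‖v‖ ^ 2) ∧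
          (∃ c > (0 : ℝ), ∀ v ∈ Vᗮ, ∑ i ∈ Aᶜ, ‖(inner 𝕜 v (f i) : 𝕜)‖ ^ 2 = c * ‖v‖ ^ 2)) := by
  refine ⟨fun A ⟨V, hV, hVperp, ⟨c, _, hc⟩, _⟩ =>
    div_gcd_dvd_card_of_orthodecomposable hn hunit htight hV hVperp hc,
    fun hgcd ⟨A, hA, hAuniv, V, hV, hVperp, ⟨c, _, hc⟩, _⟩ => hAuniv ?_⟩
  have hk : k ∣ A.card := by
    simpa [hgcd] using div_gcd_dvd_card_of_orthodecomposable hn hunit htight hV hVperp hc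
  have hpos : 0 < A.card := card_pos.mpr (nonempty_iff_ne_empty.mpr hA)
  refine eq_univ_of_card A (le_antisymm (card_le_univ A) ?_)
  simpa using Nat.le_of_dvd hpos hk

/-- If a spherical tight frame of `k` vectors in `𝕜ⁿ` is orthodecomposable via a subset
`A`, then `|A|` is a multiple of `k' = k / gcd(n,k)`; in particular if `gcd(n,k) = 1`
then no spherical tight frame of `k` vectors in `𝕜ⁿ` is orthodecomposable. -/
theorem stmt16 {𝕜 : Type*} [RCLike 𝕜] {n k : ℕ} (hn : 0 < n) (hk : 0 < k)
    (f : Fin k → EuclideanSpace 𝕜 (Fin n))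
    (hunit : ∀ j, ‖f j‖ = 1)
    (htight : ∀ v : EuclideanSpace 𝕜 (Fin n),
      ∑ j, ‖(inner 𝕜 v (f j) : 𝕜)‖ ^ 2 = ((k : ℝ) / n) * ‖v‖ ^ 2) :
    (∀ A : Finset (Fin k),
      (∃ V : Submodule 𝕜 (EuclideanSpace 𝕜 (Fin n)),
        (∀ i ∈ A, f i ∈ V) ∧ (∀ i ∉ A, f i ∈ Vᗮ) ∧
        (∃ c > (0 : ℝ), ∀ v ∈ V, ∑ i ∈ A, ‖(inner 𝕜 v (f i) : 𝕜)‖ ^ 2 = c * ‖v‖ ^ 2) ∧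
        (∃ c > (0 : ℝ), ∀ v ∈ Vᗮ, ∑ i ∈ Aᶜ, ‖(inner 𝕜 v (f i) : 𝕜)‖ ^ 2 = c * ‖v‖ ^ 2)) →
      (k / Nat.gcd n k) ∣ A.card) ∧
    (Nat.gcd n k = 1 →
      ¬ ∃ A : Finset (Fin k), A ≠ ∅ ∧ A ≠ Finset.univ ∧
        ∃ V : Submodule 𝕜 (EuclideanSpace 𝕜 (Fin n)),
          (∀ i ∈ A, f i ∈ V) ∧ (∀ i ∉ A, f i ∈ Vᗮ) ∧
          (∃ c > (0 : ℝ), ∀ v ∈ V, ∑ i ∈ A, ‖(inner 𝕜 v (f i) : 𝕜)‖ ^ 2 = c * ‖v‖ ^ 2) ∧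
          (∃ c > (0 : ℝ), ∀ v ∈ Vᗮ, ∑ i ∈ Aᶜ, ‖(inner 𝕜 v (f i) : 𝕜)‖ ^ 2 = c * ‖v‖ ^ 2)) :=
  stmt16_general hn f hunit htight
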